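/- arXiv:2002.11766 — 13 statements merged into one kernel-verified Lean document; each statement's English description precedes it below -/
import Mathlib

section
/- Let T be a tree, let G be a subgroup of Aut(T) and let k ≥ 1 be an integer. Then the P_k-closure G^{P_k} is a subgroup of Aut(T) containing G, and it is closed in the permutation topology: every g ∈ Aut(T) such that for each finite set X of vertices there exists h ∈ G^{P_k} with g x = h x for all x ∈ X, belongs to G^{P_k}. -/
open SimpleGraph

variable {V : Type*}

/-- The automorphism group of a simple graph `T`, as a subgroup of `Equiv.Perm V`. -/
def SimpleGraph.autGroup (T : SimpleGraph V) : Subgroup (Equiv.Perm V) where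
  carrier := {g : Equiv.Perm V | ∀ u v : V, T.Adj (g u) (g v) ↔ T.Adj u v}
  one_mem' := by intro u v; simp
  mul_mem' := by
    intro a b ha hb u v
    simpa using (ha (b u) (b v)).trans (hb u v)
  inv_mem' := by
    intro a ha u v
    simpa using (ha (a⁻¹ u) (a⁻¹ v)).symm

/-- The `P_k`-closure of a set `G` of automorphisms of `T`: all automorphisms `g` such that
for every vertex `v` and every finite set `X` of vertices at distance at most `k` from `v`,
some element of `G` agrees with `g` on `X`. -/
def pClosure (T : SimpleGraph V) (k : ℕ) (G : Set ↥(T.autGroup)) : Set ↥(T.autGroup) :=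
  {g | ∀ (v : V) (X : Finset V), (∀ x ∈ X, T.dist v x ≤ k) →
    ∃ h ∈ G, ∀ x ∈ X, g.val x = h.val x}



/-- An element of the automorphism group, viewed as a graph isomorphism. -/
def SimpleGraph.autIso (T : SimpleGraph V) (g : ↥(T.autGroup)) : T ≃g T :=
  ⟨g.val, fun {a b} => g.prop a b⟩

lemma aut_dist_le (T : SimpleGraph V) (g : ↥(T.autGroup)) (u v : V) :
    T.dist (g.val u) (g.val v) ≤ T.dist u v := by
  by_cases hr : T.Reachable u v
  · obtain ⟨p, hp⟩ := hr.exists_walk_length_eq_dist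
    calc T.dist (g.val u) (g.val v) ≤ (p.map (T.autIso g).toHom).length := SimpleGraph.dist_le _
      _ = p.length := p.length_map _
      _ = T.dist u v := hp
  · have hr' : ¬T.Reachable (g.val u) (g.val v) := by
      intro h
      exact hr (by simpa [SimpleGraph.autIso] using h.map (T.autIso g).symm.toHom)
    rw [SimpleGraph.dist_eq_zero_of_not_reachable hr,
      SimpleGraph.dist_eq_zero_of_not_reachable hr']

lemma aut_dist (T : SimpleGraph V) (g : ↥(T.autGroup)) (u v : V) :
    T.dist (g.val u) (g.val v) = T.dist u v := by
  refine le_antisymm (aut_dist_le T g u v) ?_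
  have := aut_dist_le T g⁻¹ (g.val u) (g.val v)
  simpa using this

/-- Proposition: the `P_k`-closure of a subgroup `G` of `Aut(T)` is a subgroup of `Aut(T)`
containing `G`, and it is closed in the permutation topology. -/
theorem pClosure_isSubgroup_and_closed
    (T : SimpleGraph V) (hT : T.IsTree) (G : Subgroup ↥(T.autGroup)) (k : ℕ) (hk : 1 ≤ k) :
    (∃ H : Subgroup ↥(T.autGroup),
      (H : Set ↥(T.autGroup)) = pClosure T k (G : Set ↥(T.autGroup))) ∧
    (G : Set ↥(T.autGroup)) ⊆ pClosure T k (G : Set ↥(T.autGroup)) ∧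
    (∀ g : ↥(T.autGroup),
      (∀ X : Finset V, ∃ h ∈ pClosure T k (G : Set ↥(T.autGroup)), ∀ x ∈ X, g.val x = h.val x) →
      g ∈ pClosure T k (G : Set ↥(T.autGroup))) := by
  classical
  constructor
  · refine ⟨{ carrier := pClosure T k (G : Set ↥(T.autGroup)), mul_mem' := ?_, one_mem' := ?_, inv_mem' := ?_ }, rfl⟩
    · -- mul_mem
      intro a b ha hb v X hX
      obtain ⟨h2, hh2, hagr2⟩ := hb v X hX
      have hside : ∀ y ∈ X.image b.val, T.dist (b.val v) y ≤ k := by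
        intro y hy
        obtain ⟨x, hx, rfl⟩ := Finset.mem_image.mp hy
        rw [aut_dist]
        exact hX x hx
      obtain ⟨h1, hh1, hagr1⟩ := ha (b.val v) (X.image b.val) hside
      refine ⟨h1 * h2, G.mul_mem hh1 hh2, fun x hx => ?_⟩
      have h3 := hagr1 (b.val x) (Finset.mem_image_of_mem _ hx)
      show a.val (b.val x) = h1.val (h2.val x)
      rw [h3, ← hagr2 x hx]
    · -- one_mem
      intro v X hX
      exact ⟨1, G.one_mem, fun _ _ => rfl⟩
    · -- inv_mem
      intro a ha v X hX
      have hside : ∀ y ∈ X.image a⁻¹.val, T.dist (a⁻¹.val v) y ≤ k := by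
        intro y hy
        obtain ⟨x, hx, rfl⟩ := Finset.mem_image.mp hy
        rw [aut_dist]
        exact hX x hx
      obtain ⟨h, hh, hagr⟩ := ha (a⁻¹.val v) (X.image a⁻¹.val) hside
      refine ⟨h⁻¹, G.inv_mem hh, fun x hx => ?_⟩
      have h1 := hagr (a⁻¹.val x) (Finset.mem_image_of_mem _ hx)
      have hx' : x = h.val (a⁻¹.val x) := by
        have h2 : a.val (a⁻¹.val x) = x := by
          simp [Subgroup.coe_inv]
        rw [← h1, h2]
      calc a⁻¹.val x = h⁻¹.val (h.val (a⁻¹.val x)) := by simp [Subgroup.coe_inv]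
        _ = h⁻¹.val x := by rw [← hx']
  constructor
  · intro g hg v X hX
    exact ⟨g, hg, fun _ _ => rfl⟩
  · intro g hg v X hX
    obtain ⟨h, hh, hagr⟩ := hg X
    obtain ⟨h', hh', hagr'⟩ := hh v X hX
    exact ⟨h', hh', fun x hx => (hagr x hx).trans (hagr' x hx)⟩
end

section
/- Let T be a tree, let G be a subgroup of Aut(T) and let k, l be integers with 1 ≤ l ≤ k. Then G^{P_l} = (G^{P_k})^{P_l}. In particular (G^{P_k})^{P_k} = G^{P_k}, i.e., G^{P_k} is P_k-closed. -/
open SimpleGraph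

variable {V : Type*}

lemma pClosure_mono_self (T : SimpleGraph V) (n : ℕ) (G : Set ↥(T.autGroup)) :
    G ⊆ pClosure T n G := by
  intro g hg v X hX
  exact ⟨g, hg, fun x _ => rfl⟩

lemma pClosure_pClosure_of_le (T : SimpleGraph V) {m n : ℕ} (hmn : m ≤ n)
    (G : Set ↥(T.autGroup)) :
    pClosure T m (pClosure T n G) = pClosure T m G := by
  ext g
  constructor
  · intro hg v X hX
    obtain ⟨h, hh, hagree⟩ := hg v X hX
    obtain ⟨h', hh', hagree'⟩ := hh v X (fun x hx => (hX x hx).trans hmn)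
    exact ⟨h', hh', fun x hx => (hagree x hx).trans (hagree' x hx)⟩
  · intro hg v X hX
    obtain ⟨h, hh, hagree⟩ := hg v X hX
    exact ⟨h, pClosure_mono_self T n G hh, hagree⟩

/-- Proposition: `G^{P_l} = (G^{P_k})^{P_l}` whenever `1 ≤ l ≤ k`; in particular
`(G^{P_k})^{P_k} = G^{P_k}`, i.e. the `P_k`-closure is `P_k`-closed. -/
theorem pClosure_pClosure
    (T : SimpleGraph V) (hT : T.IsTree) (G : Subgroup ↥(T.autGroup))
    (k l : ℕ) (hl : 1 ≤ l) (hlk : l ≤ k) :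
    pClosure T l (G : Set ↥(T.autGroup)) =
      pClosure T l (pClosure T k (G : Set ↥(T.autGroup))) ∧
    pClosure T k (pClosure T k (G : Set ↥(T.autGroup))) =
      pClosure T k (G : Set ↥(T.autGroup)) := by
  exact ⟨(pClosure_pClosure_of_le T hlk _).symm, pClosure_pClosure_of_le T le_rfl _⟩
end

section
/- Let T be a tree, let G be a subgroup of Aut(T), let k ≥ 1 be an integer and let X be any set of vertices of T. If G is P_k-closed, then the pointwise stabilizer G_{(X)} = {g ∈ G : g x = x for all x ∈ X} is P_k-closed. -/
open SimpleGraph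

variable {V : Type*}

/-- Lemma: if `G` is `P_k`-closed, then the pointwise stabilizer of any set of vertices
is `P_k`-closed. -/
theorem pointwiseStabilizer_pClosed
    (T : SimpleGraph V) (hT : T.IsTree) (G : Subgroup ↥(T.autGroup)) (k : ℕ) (hk : 1 ≤ k)
    (hG : pClosure T k (G : Set ↥(T.autGroup)) = (G : Set ↥(T.autGroup)))
    (X : Set V) :
    pClosure T k {g : ↥(T.autGroup) | g ∈ G ∧ ∀ x ∈ X, g.val x = x} =
      {g : ↥(T.autGroup) | g ∈ G ∧ ∀ x ∈ X, g.val x = x} := by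
  ext g
  constructor
  · intro hg
    constructor
    · -- monotonicity: g is in the closure of G, hence in G
      have : g ∈ (G : Set ↥(T.autGroup)) := by
        rw [← hG]
        intro v Y hY
        obtain ⟨h, ⟨hhG, _⟩, hagree⟩ := hg v Y hY
        exact ⟨h, hhG, hagree⟩
      exact this
    · intro x hx
      obtain ⟨h, ⟨_, hfix⟩, hagree⟩ := hg x {x} (by intro y hy; simp only [Finset.mem_singleton] at hy; subst hy; rw [T.dist_self]; omega)
      have := hagree x (by simp)
      rw [this, hfix x hx]
  · intro hg v Y hY
    exact ⟨g, hg, fun _ _ => rfl⟩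
end

section
/- Let T be a tree and let G be a closed subgroup of Aut(T). Then G = G^{P_1} if and only if G has property P with respect to the edges of T. -/
open SimpleGraph

variable {V : Type*}

/-!
For an edge `xy`, let `T_xy` be the half-tree of vertices closer to `x` than to `y`.

If `G` is `P_1`-closed and `g₁, g₂ ∈ G` fix `x` and `y`, the automorphism equal to `g₁` on `T_xy`
and to `g₂` on `T_yx` agrees on every ball of radius one with `g₁` or `g₂`, because such a ball
meets the far half-tree at most in the endpoint of `xy`, which both fix; so it lies in `G`.

Conversely, property `P` lets two elements `h₁, h₂ ∈ G` that agree on an edge `vw` be glued along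
it inside `G`: apply `P` to `1` and `h₁⁻¹ h₂`. Gluing, one neighbour `w` of `v` at a time, elements
of `G` that match `g` on the `(n+1)`-balls around the neighbours yields one that matches `g` on the
`(n+2)`-ball around `v`. By induction every `g ∈ G^{P_1}` agrees with elements of `G` on each finite
set, so `g ∈ G` as `G` is closed.
-/

namespace SimpleGraph

section

variable {W : Type*} {G : SimpleGraph V} {G' : SimpleGraph W} {u v w x y z : V}

theorem Hom.edist_apply_le (f : G →g G') (u v : V) : G'.edist (f u) (f v) ≤ G.edist u v := by
  by_cases h : G.edist u v = ⊤
  · simp [h]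
  obtain ⟨p, hp⟩ := exists_walk_of_edist_ne_top h
  rw [← hp, ← p.length_map f]
  exact edist_le _

theorem Iso.edist_eq (f : G ≃g G') (u v : V) : G'.edist (f u) (f v) = G.edist u v :=
  (f.toHom.edist_apply_le u v).antisymm <| by simpa using f.symm.toHom.edist_apply_le (f u) (f v)

theorem Iso.dist_eq (f : G ≃g G') (u v : V) : G'.dist (f u) (f v) = G.dist u v := by
  simp only [dist, f.edist_eq]

theorem dist_apply_of_mem_autGroup {g : Equiv.Perm V} (hg : g ∈ G.autGroup) (u v : V) :
    G.dist (g u) (g v) = G.dist u v :=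
  Iso.dist_eq ⟨g, hg _ _⟩ u v

theorem IsAcyclic.eq_of_length_eq_dist (hG : G.IsAcyclic) {p q : G.Walk u v}
    (hp : p.length = G.dist u v) (hq : q.length = G.dist u v) : p = q :=
  congrArg Subtype.val <| (hG.subsingleton_path u v).elim
    ⟨p, p.isPath_of_length_eq_dist hp⟩ ⟨q, q.isPath_of_length_eq_dist hq⟩

def halfTree (G : SimpleGraph V) (x y : V) : Set V :=
  {w | G.dist w x < G.dist w y}

@[simp]
theorem mem_halfTree : w ∈ G.halfTree x y ↔ G.dist w x < G.dist w y :=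
  Iff.rfl

theorem Adj.mem_halfTree (hxy : G.Adj x y) : x ∈ G.halfTree x y := by
  simpa using hxy.reachable.pos_dist_of_ne hxy.ne

theorem IsTree.mem_halfTree_or_mem_halfTree (hG : G.IsTree) (hxy : G.Adj x y) (w : V) :
    w ∈ G.halfTree x y ∨ w ∈ G.halfTree y x :=
  lt_or_gt_of_ne (hG.dist_ne_of_adj w hxy)

theorem IsTree.notMem_halfTree_iff (hG : G.IsTree) (hxy : G.Adj x y) :
    w ∉ G.halfTree x y ↔ w ∈ G.halfTree y x :=
  ⟨(hG.mem_halfTree_or_mem_halfTree hxy w).resolve_left, fun hw hw' => lt_asymm (α := ℕ) hw hw'⟩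

theorem mem_halfTree_apply_iff {g : Equiv.Perm V} (hg : g ∈ G.autGroup) (hx : g x = x)
    (hy : g y = y) : g w ∈ G.halfTree x y ↔ w ∈ G.halfTree x y := by
  rw [mem_halfTree, mem_halfTree, ← dist_apply_of_mem_autGroup hg w x,
    ← dist_apply_of_mem_autGroup hg w y, hx, hy]

theorem Reachable.exists_adj_mem_halfTree (h : G.Reachable v z) (hne : v ≠ z) :
    ∃ w, G.Adj v w ∧ z ∈ G.halfTree w v := by
  obtain ⟨p, hp⟩ := h.exists_walk_length_eq_dist
  cases p with
  | nil => exact absurd rfl hne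
  | cons hvw q =>
    refine ⟨_, hvw, ?_⟩
    rw [mem_halfTree, dist_comm, dist_comm (u := z), ← hp, Walk.length_cons]
    exact Nat.lt_succ_of_le (dist_le q)

theorem IsTree.adj_iff_of_mem_halfTree (hG : G.IsTree) (hxy : G.Adj x y)
    (hu : u ∈ G.halfTree x y) (hv : v ∈ G.halfTree y x) : G.Adj u v ↔ u = x ∧ v = y := by
  refine ⟨fun huv => ?_, by rintro ⟨rfl, rfl⟩; exact hxy⟩
  rw [mem_halfTree] at hu hv
  have huy := hG.dist_eq_dist_add_one_of_adj u hxy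
  have hvx := hG.dist_eq_dist_add_one_of_adj v hxy
  have hvux := hG.connected.dist_triangle (u := v) (v := u) (w := x)
  have huvy := hG.connected.dist_triangle (u := u) (v := v) (w := y)
  have huv1 : G.dist u v = 1 := dist_eq_one_iff_adj.mpr huv
  have hvu1 : G.dist v u = 1 := dist_eq_one_iff_adj.mpr huv.symm
  obtain ⟨q, hq⟩ := hG.connected.exists_walk_length_eq_dist u x
  obtain ⟨r, hr⟩ := hG.connected.exists_walk_length_eq_dist v y
  -- both are geodesics from `u` to `y`, so they coincide and `x` lies on the second one
  have hqr : q.concat hxy = .cons huv r :=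
    hG.isAcyclic.eq_of_length_eq_dist (by simp; omega) (by simp; omega)
  have hx : x ∈ (Walk.cons huv r).support :=
    hqr ▸ q.support_subset_support_concat hxy q.end_mem_support
  rcases List.mem_cons.mp (Walk.support_cons huv r ▸ hx) with rfl | hxr
  · rw [dist_self] at hvux
    exact ⟨rfl, hG.connected.dist_eq_zero_iff.mp (by omega)⟩
  · classical
    have := (dist_le _).trans (r.length_takeUntil_le_length hxr)
    omega

theorem IsTree.mem_halfTree_or_eq_of_dist_le_one (hG : G.IsTree) (hxy : G.Adj x y)
    (hv : v ∈ G.halfTree x y) (hvu : G.dist v u ≤ 1) : u ∈ G.halfTree x y ∨ u = y := by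
  refine (hG.mem_halfTree_or_mem_halfTree hxy u).imp_right fun hu => ?_
  have hne : v ≠ u := by
    rintro rfl
    exact lt_asymm (α := ℕ) hv hu
  have huv : G.Adj v u := dist_eq_one_iff_adj.mp (hvu.antisymm (hG.connected.pos_dist_of_ne hne))
  exact ((hG.adj_iff_of_mem_halfTree hxy hv hu).mp huv).2

theorem IsTree.exists_mem_autGroup_eqOn_halfTree (hG : G.IsTree) (hxy : G.Adj x y)
    {g₁ g₂ : Equiv.Perm V} (hg₁ : g₁ ∈ G.autGroup) (hg₂ : g₂ ∈ G.autGroup)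
    (h₁x : g₁ x = x) (h₁y : g₁ y = y) (h₂x : g₂ x = x) (h₂y : g₂ y = y) :
    ∃ f ∈ G.autGroup, Set.EqOn f g₁ (G.halfTree x y) ∧ Set.EqOn f g₂ (G.halfTree y x) := by
  classical
  have hs₁ (w : V) := mem_halfTree_apply_iff (w := w) hg₁ h₁x h₁y
  have hs₂ (w : V) := (mem_halfTree_apply_iff (w := w) hg₂ h₂x h₂y).not
  let f := (g₁.subtypePerm hs₁).subtypeCongr (g₂.subtypePerm hs₂)
  have hf₁ {w : V} (hw : w ∈ G.halfTree x y) : f w = g₁ w :=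
    Equiv.Perm.subtypeCongr.left_apply _ _ hw
  have hf₂ {w : V} (hw : w ∉ G.halfTree x y) : f w = g₂ w :=
    Equiv.Perm.subtypeCongr.right_apply _ _ hw
  have cross {u v : V} (hu : u ∈ G.halfTree x y) (hv : v ∉ G.halfTree x y) :
      G.Adj (f u) (f v) ↔ G.Adj u v := by
    rw [hf₁ hu, hf₂ hv,
      hG.adj_iff_of_mem_halfTree hxy ((hs₁ u).mpr hu)
        ((hG.notMem_halfTree_iff hxy).mp ((hs₂ v).mpr hv)),
      hG.adj_iff_of_mem_halfTree hxy hu ((hG.notMem_halfTree_iff hxy).mp hv),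
      g₁.injective.eq_iff' h₁x, g₂.injective.eq_iff' h₂y]
  refine ⟨f, fun u v => ?_, fun w => hf₁, fun w hw => hf₂ ((hG.notMem_halfTree_iff hxy).mpr hw)⟩
  by_cases hu : u ∈ G.halfTree x y <;> by_cases hv : v ∈ G.halfTree x y
  · rw [hf₁ hu, hf₁ hv]
    exact hg₁ u v
  · exact cross hu hv
  · rw [adj_comm, cross hv hu, adj_comm]
  · rw [hf₂ hu, hf₂ hv]
    exact hg₂ u v

end

section

variable {T : SimpleGraph V} {G : Subgroup T.autGroup} {x y : V}

def HasEdgePropertyP (G : Subgroup T.autGroup) : Prop :=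
  ∀ x y : V, T.Adj x y → ∀ g₁ ∈ G, ∀ g₂ ∈ G,
    g₁.val x = x → g₁.val y = y → g₂.val x = x → g₂.val y = y →
    ∃ g ∈ G, g.val x = x ∧ g.val y = y ∧
      Set.EqOn g.val g₁.val (T.halfTree x y) ∧ Set.EqOn g.val g₂.val (T.halfTree y x)

theorem subset_pClosure (k : ℕ) (G : Set T.autGroup) : G ⊆ pClosure T k G :=
  fun g hg _ _ _ => ⟨g, hg, fun _ _ => rfl⟩

theorem pClosure_anti {k l : ℕ} (hkl : k ≤ l) (G : Set T.autGroup) :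
    pClosure T l G ⊆ pClosure T k G :=
  fun _ hg v X hX => hg v X fun x hx => (hX x hx).trans hkl

theorem IsTree.mem_pClosure_one_of_eqOn (hT : T.IsTree) (hxy : T.Adj x y) {G : Set T.autGroup}
    {f g₁ g₂ : T.autGroup} (hg₁ : g₁ ∈ G) (hg₂ : g₂ ∈ G)
    (h₁ : Set.EqOn f.val g₁.val (T.halfTree x y)) (h₁y : f.val y = g₁.val y)
    (h₂ : Set.EqOn f.val g₂.val (T.halfTree y x)) (h₂x : f.val x = g₂.val x) :
    f ∈ pClosure T 1 G := by
  intro v X hX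
  rcases hT.mem_halfTree_or_mem_halfTree hxy v with hv | hv
  · refine ⟨g₁, hg₁, fun u hu => ?_⟩
    rcases hT.mem_halfTree_or_eq_of_dist_le_one hxy hv (hX u hu) with hu | rfl
    exacts [h₁ hu, h₁y]
  · refine ⟨g₂, hg₂, fun u hu => ?_⟩
    rcases hT.mem_halfTree_or_eq_of_dist_le_one hxy.symm hv (hX u hu) with hu | rfl
    exacts [h₂ hu, h₂x]

theorem IsTree.hasEdgePropertyP_of_pClosure_one_eq (hT : T.IsTree)
    (hG : pClosure T 1 (G : Set T.autGroup) = G) : HasEdgePropertyP G := by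
  intro x y hxy g₁ hg₁ g₂ hg₂ h₁x h₁y h₂x h₂y
  obtain ⟨f, hf, hf₁, hf₂⟩ :=
    hT.exists_mem_autGroup_eqOn_halfTree hxy g₁.2 g₂.2 h₁x h₁y h₂x h₂y
  have hfx : f x = x := (hf₁ hxy.mem_halfTree).trans h₁x
  have hfy : f y = y := (hf₂ hxy.symm.mem_halfTree).trans h₂y
  have hfG : ⟨f, hf⟩ ∈ G := by
    rw [← SetLike.mem_coe, ← hG]
    exact hT.mem_pClosure_one_of_eqOn hxy hg₁ hg₂ hf₁ (hfy.trans h₁y.symm) hf₂ (hfx.trans h₂x.symm)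
  exact ⟨⟨f, hf⟩, hfG, hfx, hfy, hf₁, hf₂⟩

theorem HasEdgePropertyP.exists_eqOn_union (hP : HasEdgePropertyP G) (hxy : T.Adj x y)
    {g : V → V} {h₁ h₂ : T.autGroup} (hh₁ : h₁ ∈ G) (hh₂ : h₂ ∈ G) {A B : Set V}
    (hA : Set.EqOn g h₁.val A) (hB : Set.EqOn g h₂.val B) (hx : x ∈ A ∩ B) (hy : y ∈ A ∩ B) :
    ∃ h ∈ G, Set.EqOn g h.val (A ∩ T.halfTree x y ∪ B ∩ T.halfTree y x) := by
  have hfix {z : V} (hz : z ∈ A ∩ B) : (h₁⁻¹ * h₂).val z = z := by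
    simp [← hB hz.2, hA hz.1]
  obtain ⟨e, he, -, -, he₁, he₂⟩ :=
    hP x y hxy 1 (one_mem G) _ (mul_mem (inv_mem hh₁) hh₂) rfl rfl (hfix hx) (hfix hy)
  refine ⟨h₁ * e, mul_mem hh₁ he, ?_⟩
  rintro w (⟨hwA, hw⟩ | ⟨hwB, hw⟩)
  · simp [hA hwA, he₁ hw]
  · simp [hB hwB, he₂ hw]

theorem HasEdgePropertyP.exists_eqOn_insert (hT : T.IsTree) (hP : HasEdgePropertyP G) {n : ℕ}
    {g : T.autGroup} (hg : g ∈ pClosure T (n + 1) G) {v w z : V} (hvw : T.Adj v w)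
    (hz : z ∈ T.halfTree w v) (hvz : T.dist v z ≤ n + 2) {S : Finset V}
    (hS : ∀ u ∈ S, T.dist v u ≤ n + 2)
    (hgS : ∃ h ∈ G, Set.EqOn g.val h.val (insert v (insert w ↑S))) :
    ∃ h ∈ G, Set.EqOn g.val h.val (insert z ↑S) := by
  classical
  obtain ⟨h₁, hh₁, hA⟩ := hgS
  set B := insert v (insert w ((insert z S).filter (· ∈ T.halfTree w v)))
  obtain ⟨h₂, hh₂, hB⟩ := hg w B (by
    simp only [B, Finset.mem_insert, Finset.mem_filter, mem_halfTree]
    rintro u (rfl | rfl | ⟨hu, huw⟩)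
    · rw [dist_comm, dist_eq_one_iff_adj.mpr hvw]
      omega
    · simp
    · have : T.dist v u ≤ n + 2 := by rcases hu with rfl | hu; exacts [hvz, hS u hu]
      rw [dist_comm, dist_comm (u := u)] at huw
      omega)
  obtain ⟨h, hh, hAB⟩ := hP.exists_eqOn_union hvw hh₁ hh₂ hA (B := B) hB (by simp [B]) (by simp [B])
  refine ⟨h, hh, hAB.mono fun u hu => ?_⟩
  rcases hT.mem_halfTree_or_mem_halfTree hvw u with huv | huw
  · have huz : u ≠ z := by
      rintro rfl
      exact (hT.notMem_halfTree_iff hvw).mpr hz huv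
    exact .inl ⟨.inr (.inr (hu.resolve_left huz)), huv⟩
  · refine .inr ⟨?_, huw⟩
    simp only [B, Finset.coe_insert, Finset.coe_filter]
    exact .inr (.inr ⟨by simpa using hu, huw⟩)

theorem HasEdgePropertyP.pClosure_succ_subset (hT : T.IsTree) (hP : HasEdgePropertyP G) (n : ℕ) :
    pClosure T (n + 1) (G : Set T.autGroup) ⊆ pClosure T (n + 2) G := by
  classical
  intro g hg v
  have hg₁ : g ∈ pClosure T 1 G := pClosure_anti (by omega) _ hg
  -- a finite set `N` of neighbours of `v` is carried along, so that the neighbour through which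
  -- the next vertex is reached is already matched when gluing
  suffices ∀ Z : Finset V, (∀ z ∈ Z, T.dist v z ≤ n + 2) → ∀ N : Finset V,
      (∀ u ∈ N, T.dist v u ≤ 1) → ∃ h ∈ G, Set.EqOn g.val h.val ↑(N ∪ Z) by
    intro Y hY
    obtain ⟨h, hh, hgh⟩ := this Y hY ∅ (by simp)
    exact ⟨h, hh, fun u hu => hgh (by simpa using hu)⟩
  intro Z
  induction Z using Finset.induction_on with
  | empty =>
    intro _ N hN
    obtain ⟨h, hh, hgh⟩ := hg₁ v N hN
    exact ⟨h, hh, fun u hu => hgh u (by simpa using hu)⟩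
  | insert z Z _ ih =>
    intro hZ N hN
    have hZ' : ∀ u ∈ Z, T.dist v u ≤ n + 2 := fun u hu => hZ u (Finset.mem_insert_of_mem hu)
    have hvz := hZ z (Finset.mem_insert_self z Z)
    by_cases hvz₁ : T.dist v z ≤ 1
    · simpa using ih hZ' (insert z N) (by simpa [hvz₁] using hN)
    obtain ⟨w, hvw, hzw⟩ := (hT.connected v z).exists_adj_mem_halfTree (by rintro rfl; simp at hvz₁)
    rw [Finset.union_insert, Finset.coe_insert]
    refine hP.exists_eqOn_insert hT hg hvw hzw hvz (S := N ∪ Z) ?_ ?_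
    · simp only [Finset.mem_union]
      rintro u (hu | hu)
      exacts [(hN u hu).trans (by omega), hZ' u hu]
    · obtain ⟨h, hh, hgh⟩ :=
        ih hZ' (insert v (insert w N)) (by simpa [dist_eq_one_iff_adj.mpr hvw] using hN)
      exact ⟨h, hh, by simpa [Set.insert_union] using hgh⟩

theorem HasEdgePropertyP.pClosure_one_subset (hT : T.IsTree) (hP : HasEdgePropertyP G) (n : ℕ) :
    pClosure T 1 (G : Set T.autGroup) ⊆ pClosure T (n + 1) G := by
  induction n with
  | zero => exact subset_rfl
  | succ n ih => exact ih.trans (hP.pClosure_succ_subset hT n)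

theorem mem_of_forall_mem_pClosure [Nonempty V] {g : T.autGroup}
    (hclosed : ∀ g : T.autGroup, (∀ X : Finset V, ∃ h ∈ G, ∀ x ∈ X, g.val x = h.val x) → g ∈ G)
    (hg : ∀ k, g ∈ pClosure T k G) : g ∈ G := by
  inhabit V
  exact hclosed g fun X => hg _ default X fun x hx => Finset.le_sup (f := T.dist default) hx

theorem HasEdgePropertyP.pClosure_one_eq (hT : T.IsTree) (hP : HasEdgePropertyP G)
    (hclosed : ∀ g : T.autGroup, (∀ X : Finset V, ∃ h ∈ G, ∀ x ∈ X, g.val x = h.val x) → g ∈ G) :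
    pClosure T 1 (G : Set T.autGroup) = G := by
  have := hT.connected.nonempty
  refine subset_antisymm (fun g hg => mem_of_forall_mem_pClosure hclosed fun k => ?_)
    (subset_pClosure 1 _)
  exact pClosure_anti k.le_succ _ (hP.pClosure_one_subset hT k hg)

end

end SimpleGraph

/-- Theorem: for a closed subgroup `G` of `Aut(T)`, `G = G^{P_1}` if and only if `G` has
Tits' property `P` with respect to the edges of `T`. -/
theorem pClosed_iff_propertyP_edges
    (T : SimpleGraph V) (hT : T.IsTree) (G : Subgroup ↥(T.autGroup))
    (hclosed : ∀ g : ↥(T.autGroup),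
      (∀ X : Finset V, ∃ h ∈ G, ∀ x ∈ X, g.val x = h.val x) → g ∈ G) :
    pClosure T 1 (G : Set ↥(T.autGroup)) = (G : Set ↥(T.autGroup)) ↔
      (∀ x y : V, T.Adj x y → ∀ g₁ ∈ G, ∀ g₂ ∈ G,
        g₁.val x = x → g₁.val y = y → g₂.val x = x → g₂.val y = y →
        ∃ g ∈ G, g.val x = x ∧ g.val y = y ∧
          (∀ w : V, T.dist w x < T.dist w y → g.val w = g₁.val w) ∧
          (∀ w : V, T.dist w y < T.dist w x → g.val w = g₂.val w)) :=
  ⟨hT.hasEdgePropertyP_of_pClosure_one_eq, fun hP => HasEdgePropertyP.pClosure_one_eq hT hP hclosed⟩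
end

section
/- Let T be a tree, let G be a P_1-closed subgroup of Aut(T), and let H be a subgroup of G that contains the stabilizer G_{(x,y)} = {g ∈ G : g x = x and g y = y} of some arc (x,y) of T. Then H is P_1-closed. -/
open SimpleGraph

variable {V : Type*}

/-- Lemma: a subgroup `H` of a `P_1`-closed group `G ≤ Aut(T)` containing an arc stabilizer
of `G` is itself `P_1`-closed. -/
theorem subgroup_containing_arcStabilizer_pClosed
    (T : SimpleGraph V) (hT : T.IsTree) (G : Subgroup ↥(T.autGroup))
    (hG : pClosure T 1 (G : Set ↥(T.autGroup)) = (G : Set ↥(T.autGroup)))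
    (H : Subgroup ↥(T.autGroup)) (hHG : H ≤ G)
    (x y : V) (hxy : T.Adj x y)
    (hstab : ∀ g ∈ G, g.val x = x → g.val y = y → g ∈ H) :
    pClosure T 1 (H : Set ↥(T.autGroup)) = (H : Set ↥(T.autGroup)) := by
  apply Set.Subset.antisymm
  · intro g hg
    have hgG : g ∈ G := by
      have hmem : g ∈ pClosure T 1 (G : Set ↥(T.autGroup)) := by
        intro v X hX
        obtain ⟨h, hh, hagree⟩ := hg v X hX
        exact ⟨h, hHG hh, hagree⟩
      rwa [hG] at hmem
    haveI := Classical.decEq V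
    have hd : T.dist x y ≤ 1 := by
      simpa using SimpleGraph.dist_le hxy.toWalk
    obtain ⟨h, hh, hagree⟩ := hg x {x, y} (by
      intro z hz
      rcases Finset.mem_insert.mp hz with rfl | hz
      · simp [SimpleGraph.dist_self]
      · rw [Finset.mem_singleton] at hz; subst hz; exact hd)
    have hx' : g.val x = h.val x := hagree x (by simp)
    have hy' : g.val y = h.val y := hagree y (by simp)
    have hmem : h⁻¹ * g ∈ H := by
      apply hstab _ (G.mul_mem (G.inv_mem (hHG hh)) hgG)
      · show (h.val⁻¹ * g.val) x = x
        simp [Equiv.Perm.mul_apply, hx']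
      · show (h.val⁻¹ * g.val) y = y
        simp [Equiv.Perm.mul_apply, hy']
    have := H.mul_mem hh hmem
    rwa [mul_inv_cancel_left] at this
  · intro g hg v X hX
    exact ⟨g, hg, fun x _ => rfl⟩
end

section
/- Let T be a tree, let G be a P_1-closed subgroup of Aut(T), and let H be a subgroup of G that contains the stabilizer G_v = {g ∈ G : g v = v} of some vertex v of T. Then H is P_1-closed. -/
open SimpleGraph

variable {V : Type*}

/-- Corollary: a subgroup `H` of a `P_1`-closed group `G ≤ Aut(T)` containing a vertex
stabilizer of `G` is itself `P_1`-closed. -/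
theorem subgroup_containing_vertexStabilizer_pClosed
    (T : SimpleGraph V) (hT : T.IsTree) (G : Subgroup ↥(T.autGroup))
    (hG : pClosure T 1 (G : Set ↥(T.autGroup)) = (G : Set ↥(T.autGroup)))
    (H : Subgroup ↥(T.autGroup)) (hHG : H ≤ G)
    (v : V) (hstab : ∀ g ∈ G, g.val v = v → g ∈ H) :
    pClosure T 1 (H : Set ↥(T.autGroup)) = (H : Set ↥(T.autGroup)) := by
  apply Set.eq_of_subset_of_subset
  · intro g hg
    have hgG : g ∈ G := by
      have : g ∈ pClosure T 1 (G : Set ↥(T.autGroup)) := by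
        intro w X hX
        obtain ⟨h, hh, he⟩ := hg w X hX
        exact ⟨h, hHG hh, he⟩
      rw [hG] at this
      exact this
      
    obtain ⟨h, hh, he⟩ := hg v {v} (by simp [SimpleGraph.dist_self])
    have hv : g.val v = h.val v := he v (by simp)
    have hmem : h⁻¹ * g ∈ H := by
      refine hstab _ (mul_mem (inv_mem (hHG hh)) hgG) ?_
      simp [Subgroup.coe_mul, hv]
    have := mul_mem hh hmem
    simpa using this
  · intro g hg w X hX
    exact ⟨g, hg, fun x _ => rfl⟩
end

section
/- Let T be a tree and let G be a subgroup of Aut(T). Let G^+ denote the subgroup of G generated by all arc stabilizers G_{(x,y)} = {g ∈ G : g x = x and g y = y}, where (x,y) ranges over arcs of T. Then (G^{P_1})^+ = (G^+)^{P_1}: the subgroup of the P_1-closure of G generated by its arc stabilizers equals the P_1-closure of G^+. -/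
open SimpleGraph

variable {V : Type*}

/-- For a set `S` of automorphisms of `T`, the subgroup generated by all arc stabilizers:
elements of `S` fixing both endpoints of some arc of `T`. -/
def plusSet (T : SimpleGraph V) (S : Set ↥(T.autGroup)) : Subgroup ↥(T.autGroup) :=
  Subgroup.closure {g : ↥(T.autGroup) | g ∈ S ∧ ∃ x y : V, T.Adj x y ∧ g.val x = x ∧ g.val y = y}


/-!
If `g ∈ G^{P_k}` (`k ≥ 1`) fixes an arc `(x, y)`, then near `x` it agrees with elements of `G`
fixing `(x, y)`, i.e. with elements of `G^+`. This spreads along edges: if near `w` the map `g`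
agrees with `h ∈ G^+` and `v` is adjacent to `w`, then `h⁻¹ g ∈ G^{P_k}` fixes the arc `(v, w)`,
so near `v` it agrees with elements of `G^+`, hence so does `g`. By connectedness
`g ∈ (G^+)^{P_k}`, which gives `(G^{P_k})^+ ⊆ (G^+)^{P_k}`. Conversely, for `g ∈ (G^+)^{P_k}`
and an arc `(v, w)` pick `h ∈ G^+` agreeing with `g` on `v, w`; then `h⁻¹ g` is an arc
stabilizer in `G^{P_k}` and `g = h (h⁻¹ g) ∈ (G^{P_k})^+`.
-/

namespace SimpleGraph

variable {V' : Type*} {G : SimpleGraph V} {G' : SimpleGraph V'}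

theorem Iso.dist_le (φ : G ≃g G') (u v : V) : G'.dist (φ u) (φ v) ≤ G.dist u v := by
  by_cases h : G.Reachable u v
  · obtain ⟨p, hp⟩ := h.exists_walk_length_eq_dist
    calc G'.dist (φ u) (φ v) ≤ (p.map φ.toHom).length := SimpleGraph.dist_le _
      _ = G.dist u v := by rw [Walk.length_map, hp]
  · rw [dist_eq_zero_of_not_reachable (Iso.reachable_iff.not.mpr h)]
    exact Nat.zero_le _

theorem Iso.dist_map (φ : G ≃g G') (u v : V) : G'.dist (φ u) (φ v) = G.dist u v :=
  le_antisymm (φ.dist_le u v) (by simpa using φ.symm.dist_le (φ u) (φ v))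

theorem Reachable.induction_adj {P : V → Prop} (hP : ∀ v w, G.Adj v w → P v → P w) {u v : V}
    (h : G.Reachable u v) (hu : P u) : P v := by
  obtain ⟨p⟩ := h
  induction p with
  | nil => exact hu
  | cons hadj _ ih => exact ih (hP _ _ hadj hu)

theorem dist_autGroup_apply (T : SimpleGraph V) (g : T.autGroup) (u v : V) :
    T.dist (g.val u) (g.val v) = T.dist u v :=
  Iso.dist_map ⟨g.val, g.2 _ _⟩ u v

end SimpleGraph

variable {T : SimpleGraph V} {k : ℕ}

theorem autGroup_inv_mul_apply_eq_self {g h : T.autGroup} {v : V} :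
    (h⁻¹ * g).val v = v ↔ g.val v = h.val v :=
  Equiv.Perm.inv_eq_iff_eq

theorem mem_plusSet_of_fix {S : Set T.autGroup} {g : T.autGroup} (hg : g ∈ S) {x y : V}
    (hxy : T.Adj x y) (hx : g.val x = x) (hy : g.val y = y) : g ∈ plusSet T S :=
  Subgroup.subset_closure ⟨hg, x, y, hxy, hx, hy⟩

theorem plusSet_le (H : Subgroup T.autGroup) : plusSet T H ≤ H :=
  (Subgroup.closure_le _).mpr fun _ hg => hg.1

theorem plusSet_mono {S S' : Set T.autGroup} (h : S ⊆ S') : plusSet T S ≤ plusSet T S' :=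
  Subgroup.closure_mono fun _ hg => ⟨h hg.1, hg.2⟩

theorem pClosure_mono {S S' : Set T.autGroup} (h : S ⊆ S') : pClosure T k S ⊆ pClosure T k S' :=
  fun _ hg v X hX => (hg v X hX).imp fun _ ⟨hS, hagree⟩ => ⟨h hS, hagree⟩

theorem subset_pClosure {S : Set T.autGroup} : S ⊆ pClosure T k S :=
  fun g hg _ _ _ => ⟨g, hg, fun _ _ => rfl⟩

theorem forall_mem_image_dist_le [DecidableEq V] (g : T.autGroup) {v : V} {X : Finset V}
    (hX : ∀ x ∈ X, T.dist v x ≤ k) : ∀ x ∈ X.image g.val, T.dist (g.val v) x ≤ k :=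
  Finset.forall_mem_image.mpr fun x hx => (dist_autGroup_apply T g v x).symm ▸ hX x hx

variable (T k) in
def pClosureSubgroup (H : Subgroup T.autGroup) : Subgroup T.autGroup where
  carrier := pClosure T k H
  one_mem' _ _ _ := ⟨1, H.one_mem, fun _ _ => rfl⟩
  mul_mem' := by
    classical
    intro a b ha hb v X hX
    obtain ⟨hb', hb'H, hb'X⟩ := hb v X hX
    obtain ⟨ha', ha'H, ha'X⟩ := ha (b.val v) (X.image b.val) (forall_mem_image_dist_le b hX)
    refine ⟨ha' * hb', H.mul_mem ha'H hb'H, fun x hx => ?_⟩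
    change a.val (b.val x) = ha'.val (hb'.val x)
    rw [ha'X _ (Finset.mem_image_of_mem _ hx), hb'X x hx]
  inv_mem' := by
    classical
    intro g hg v X hX
    obtain ⟨h, hH, hX'⟩ :=
      hg (g⁻¹.val v) (X.image g⁻¹.val) (forall_mem_image_dist_le g⁻¹ hX)
    refine ⟨h⁻¹, H.inv_mem hH, fun x hx => ?_⟩
    have hgx : g.val (g.val⁻¹ x) = h.val (g.val⁻¹ x) := hX' _ (Finset.mem_image_of_mem _ hx)
    change g.val⁻¹ x = h.val⁻¹ x
    rw [Equiv.Perm.eq_inv_iff_eq, ← hgx, Equiv.Perm.coe_inv, Equiv.apply_symm_apply]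

def LocallyMem (T : SimpleGraph V) (k : ℕ) (S : Set T.autGroup) (v : V) (g : T.autGroup) :
    Prop :=
  ∀ X : Finset V, (∀ x ∈ X, T.dist v x ≤ k) → ∃ h ∈ S, ∀ x ∈ X, g.val x = h.val x

theorem LocallyMem.of_mem_pClosure {S : Set T.autGroup} {g : T.autGroup}
    (hg : g ∈ pClosure T k S) (v : V) : LocallyMem T k S v g :=
  hg v

theorem LocallyMem.exists_eq_on_adj {S : Set T.autGroup} {v w : V} {g : T.autGroup}
    (hg : LocallyMem T k S v g) (hk : 1 ≤ k) (hvw : T.Adj v w) :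
    ∃ h ∈ S, g.val v = h.val v ∧ g.val w = h.val w := by
  classical
  obtain ⟨h, hS, hagree⟩ := hg {v, w} (by
    simp only [Finset.mem_insert, Finset.mem_singleton, forall_eq_or_imp, forall_eq,
      dist_self, dist_eq_one_iff_adj.mpr hvw]
    exact ⟨Nat.zero_le _, hk⟩)
  exact ⟨h, hS, hagree v (by simp), hagree w (by simp)⟩

theorem LocallyMem.mul_left {H : Subgroup T.autGroup} {v : V} {f h : T.autGroup}
    (hf : LocallyMem T k H v f) (hh : h ∈ H) : LocallyMem T k H v (h * f) := fun X hX =>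
  let ⟨f', hf'H, hagree⟩ := hf X hX
  ⟨h * f', H.mul_mem hh hf'H, fun x hx => congrArg h.val (hagree x hx)⟩

theorem LocallyMem.plusSet_of_fix {S : Set T.autGroup} {v w : V} {g : T.autGroup}
    (hg : LocallyMem T k S v g) (hk : 1 ≤ k) (hvw : T.Adj v w) (hv : g.val v = v)
    (hw : g.val w = w) : LocallyMem T k (plusSet T S) v g := by
  classical
  intro X hX
  obtain ⟨h, hS, hagree⟩ := hg (insert v (insert w X)) (by
    simp only [Finset.mem_insert, forall_eq_or_imp, dist_self, dist_eq_one_iff_adj.mpr hvw]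
    exact ⟨Nat.zero_le _, hk, hX⟩)
  have hhv : h.val v = v := (hagree v (by simp)).symm.trans hv
  have hhw : h.val w = w := (hagree w (by simp)).symm.trans hw
  exact ⟨h, mem_plusSet_of_fix hS hvw hhv hhw, fun x hx => hagree x (by simp [hx])⟩

theorem LocallyMem.plusSet_of_adj {G : Subgroup T.autGroup} {v w : V} {g : T.autGroup}
    (hg : g ∈ pClosure T k G) (hk : 1 ≤ k) (hgw : LocallyMem T k (plusSet T G) w g)
    (hwv : T.Adj w v) : LocallyMem T k (plusSet T G) v g := by
  obtain ⟨h, hh, hgw, hgv⟩ := hgw.exists_eq_on_adj hk hwv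
  have hf : h⁻¹ * g ∈ pClosureSubgroup T k G :=
    mul_mem (inv_mem (subset_pClosure (plusSet_le G hh))) hg
  have hfv := (LocallyMem.of_mem_pClosure hf v).plusSet_of_fix hk hwv.symm
    (autGroup_inv_mul_apply_eq_self.mpr hgv) (autGroup_inv_mul_apply_eq_self.mpr hgw)
  simpa using hfv.mul_left hh

theorem mem_pClosure_plusSet_of_fix (hT : T.Connected) (hk : 1 ≤ k) {G : Subgroup T.autGroup}
    {g : T.autGroup} (hg : g ∈ pClosure T k G) {x y : V} (hxy : T.Adj x y) (hx : g.val x = x)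
    (hy : g.val y = y) : g ∈ pClosure T k (plusSet T G) := fun v =>
  (hT x v).induction_adj (P := fun u => LocallyMem T k (plusSet T G) u g)
    (fun _ _ hwv hgw => hgw.plusSet_of_adj hg hk hwv)
    ((LocallyMem.of_mem_pClosure hg x).plusSet_of_fix hk hxy hx hy)

theorem plusSet_pClosure_le (hT : T.Connected) (hk : 1 ≤ k) (G : Subgroup T.autGroup) :
    plusSet T (pClosure T k G) ≤ pClosureSubgroup T k (plusSet T G) :=
  (Subgroup.closure_le _).mpr fun _ ⟨hg, _, _, hxy, hx, hy⟩ =>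
    mem_pClosure_plusSet_of_fix hT hk hg hxy hx hy

theorem pClosure_plusSet_subset (hT : T.Connected) (hk : 1 ≤ k) (G : Subgroup T.autGroup) :
    pClosure T k (plusSet T G) ⊆ plusSet T (pClosure T k G) := by
  intro g hg
  rcases subsingleton_or_nontrivial V with _ | _
  · obtain rfl : g = 1 := Subtype.ext (Equiv.ext fun _ => Subsingleton.elim _ _)
    exact one_mem _
  obtain ⟨v⟩ := hT.nonempty
  obtain ⟨w, hvw⟩ := hT.preconnected.exists_adj_of_nontrivial v
  obtain ⟨h, hh, hgv, hgw⟩ := (LocallyMem.of_mem_pClosure hg v).exists_eq_on_adj hk hvw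
  have hf : h⁻¹ * g ∈ pClosureSubgroup T k G :=
    mul_mem (inv_mem (subset_pClosure (plusSet_le G hh))) (pClosure_mono (plusSet_le G) hg)
  have hf' : h⁻¹ * g ∈ plusSet T (pClosure T k G) := mem_plusSet_of_fix hf hvw
    (autGroup_inv_mul_apply_eq_self.mpr hgv) (autGroup_inv_mul_apply_eq_self.mpr hgw)
  simpa using mul_mem (plusSet_mono subset_pClosure hh) hf'

theorem coe_plusSet_pClosure (hT : T.Connected) (hk : 1 ≤ k) (G : Subgroup T.autGroup) :
    (plusSet T (pClosure T k G) : Set T.autGroup) = pClosure T k (plusSet T G) :=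
  Set.Subset.antisymm (fun _ hg => plusSet_pClosure_le hT hk G hg)
    (pClosure_plusSet_subset hT hk G)

/-- Proposition: `(G^{P_1})^+ = (G^+)^{P_1}`. -/
theorem plus_pClosure_comm
    (T : SimpleGraph V) (hT : T.IsTree) (G : Subgroup ↥(T.autGroup)) :
    (plusSet T (pClosure T 1 (G : Set ↥(T.autGroup))) : Set ↥(T.autGroup)) =
      pClosure T 1 ((plusSet T (G : Set ↥(T.autGroup)) : Subgroup ↥(T.autGroup)) :
        Set ↥(T.autGroup)) :=
  coe_plusSet_pClosure hT.connected le_rfl G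
end

section
/- Let T and T′ be trees and let θ: T → T′ be a locally surjective graph homomorphism. Then for every arc (u,v) of T, the half-tree T′_{(θ(u),θ(v))} is contained in the image under θ of the half-tree T_{(u,v)}: every vertex w′ of T′ with d(w′, θ(v)) < d(w′, θ(u)) equals θ(w) for some vertex w of T with d(w,v) < d(w,u). -/
open SimpleGraph

variable {V V' : Type*}

/-- A graph homomorphism `θ : T →g T'` is locally surjective if for each vertex `v` of `T`,
every vertex of `T'` adjacent to `θ v` is the image of a vertex adjacent to `v`. -/
def LocallySurjective {T : SimpleGraph V} {T' : SimpleGraph V'} (θ : T →g T') : Prop :=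
  ∀ v : V, ∀ w' : V', T'.Adj (θ v) w' → ∃ w : V, T.Adj v w ∧ θ w = w'

/-- The arc `(u,v)` is backtracking for `θ` if some vertex `u' ≠ u` adjacent to `v`
has `θ u' = θ u`. -/
def Backtracking {T : SimpleGraph V} {T' : SimpleGraph V'} (θ : T →g T') (u v : V) : Prop :=
  T.Adj u v ∧ ∃ u' : V, u' ≠ u ∧ T.Adj u' v ∧ θ u' = θ u

/-- The arc `(u,v)` is pre-backtracking for `θ` if there is a backtracking arc `(u',v')`
whose half-tree `T_{(u',v')}` is contained in the half-tree `T_{(u,v)}`. -/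
def PreBacktracking {T : SimpleGraph V} {T' : SimpleGraph V'} (θ : T →g T') (u v : V) : Prop :=
  T.Adj u v ∧ ∃ u' v' : V, Backtracking θ u' v' ∧
    ∀ w : V, T.dist w v' < T.dist w u' → T.dist w v < T.dist w u

/-!
Induct on `d(w', θ v)`. A vertex `w'` of the half-tree `T'_{(θ u, θ v)}` other than `θ v` has a
neighbour `x'` one step closer to `θ v`, still in the half-tree; by induction `x' = θ x` with
`x ∈ T_{(u,v)}`, and local surjectivity lifts `w'` to a neighbour `w` of `x`. In a tree the only
edge leaving `T_{(u,v)}` is `{v, u}`, so `w ∉ T_{(u,v)}` would force `w = u`, i.e. `w' = θ u`,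
which is not in `T'_{(θ u, θ v)}`.
-/

namespace SimpleGraph

variable {W : Type*} {G : SimpleGraph W}

lemma Walk.dist_add_dist_le_length {a b t : W} (p : G.Walk a b) (ht : t ∈ p.support) :
    G.dist a t + G.dist t b ≤ p.length := by
  classical
  rw [← p.take_spec ht, Walk.length_append]
  exact add_le_add (dist_le _) (dist_le _)

lemma exists_adj_dist_eq_of_dist_eq_add_one {u w : W} {n : ℕ} (h : G.dist u w = n + 1) :
    ∃ x, G.Adj u x ∧ G.dist x w = n := by
  obtain ⟨p, hp⟩ := exists_walk_of_dist_ne_zero (G := G) (u := u) (v := w) (by omega)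
  cases p with
  | nil => simp at h
  | @cons _ x _ hux q =>
    have hq : G.dist x w ≤ n := by
      have := dist_le q
      rw [Walk.length_cons] at hp
      omega
    have := hux.reachable.dist_triangle_left w
    rw [dist_eq_one_iff_adj.mpr hux] at this
    exact ⟨x, hux, by omega⟩

lemma IsAcyclic.eq_of_adj_of_dist_lt_of_dist_le (hG : G.IsAcyclic) {u v x w : W}
    (huv : G.Adj u v) (hxw : G.Adj x w) (hx : G.dist x v < G.dist x u)
    (hw : G.dist w u ≤ G.dist w v) : w = u := by
  have hxu : G.Reachable x u := Reachable.of_dist_ne_zero (by omega)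
  have h_uv : G.dist u v = 1 := dist_eq_one_iff_adj.mpr huv
  have h_xw : G.dist x w = 1 := dist_eq_one_iff_adj.mpr hxw
  have h_wx : G.dist w x = 1 := dist_eq_one_iff_adj.mpr hxw.symm
  have h_wxv := hxw.symm.reachable.dist_triangle_left v
  have h_xwu := hxw.reachable.dist_triangle_left u
  obtain ⟨p, hp, hpl⟩ := (hxu.trans huv.reachable).exists_path_of_dist
  obtain ⟨q, hq, hql⟩ := (hxw.symm.reachable.trans hxu).exists_path_of_dist
  have hup : u ∉ p.support := fun hu => by
    have := p.dist_add_dist_le_length hu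
    omega
  have hxq : x ∉ q.support := fun hxq => by
    have := q.dist_add_dist_le_length hxq
    omega
  -- `x ⋯ v u` and `w ⋯ u` are the paths to `u`; as `x` avoids the latter, `w` lies on the former.
  have hwP : w ∈ (p.concat huv.symm).reverse.support :=
    hG.mem_support_of_ne_mem_support_of_adj_of_isPath (hp.concat hup huv.symm).reverse hq.reverse
      hxw (by simpa using hxq)
  simp only [Walk.support_reverse, Walk.support_concat, List.mem_reverse, List.mem_append,
    List.mem_singleton] at hwP
  refine hwP.resolve_left fun hwp => ?_
  have := p.dist_add_dist_le_length hwp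
  omega

end SimpleGraph

lemma LocallySurjective.exists_dist_lt_of_adj {T : SimpleGraph V} {T' : SimpleGraph V'}
    {θ : T →g T'} (hls : LocallySurjective θ) (hT : T.IsAcyclic) {u v x : V} {w' : V'}
    (huv : T.Adj u v) (hx : T.dist x v < T.dist x u) (hxw' : T'.Adj (θ x) w') (hw' : w' ≠ θ u) :
    ∃ w, T.dist w v < T.dist w u ∧ θ w = w' := by
  obtain ⟨w, hxw, rfl⟩ := hls x w' hxw'
  exact ⟨w, not_le.mp fun hw => hw' (congrArg θ (hT.eq_of_adj_of_dist_lt_of_dist_le huv hxw hx hw)), rfl⟩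

theorem halfTree_subset_image_halfTree_general
    (T : SimpleGraph V) (T' : SimpleGraph V') (hT : T.IsTree)
    (θ : T →g T') (hls : LocallySurjective θ)
    (u v : V) (hadj : T.Adj u v) :
    ∀ w' : V', T'.dist w' (θ v) < T'.dist w' (θ u) →
      ∃ w : V, T.dist w v < T.dist w u ∧ θ w = w' := by
  intro w' hw'
  induction h : T'.dist w' (θ v) generalizing w' with
  | zero =>
    have hreach : T'.Reachable w' (θ v) :=
      (Reachable.of_dist_ne_zero (by omega)).trans (θ.map_adj hadj).reachable
    obtain rfl : w' = θ v := hreach.dist_eq_zero_iff.mp h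
    exact ⟨v, by simp [SimpleGraph.dist_comm (u := v), dist_eq_one_iff_adj.mpr hadj], rfl⟩
  | succ n ih =>
    obtain ⟨x', hwx', hx'⟩ := exists_adj_dist_eq_of_dist_eq_add_one h
    have := hwx'.reachable.dist_triangle_left (θ u)
    rw [dist_eq_one_iff_adj.mpr hwx'] at this
    obtain ⟨x, hx, rfl⟩ := ih x' (by omega) hx'
    exact hls.exists_dist_lt_of_adj hT.isAcyclic hadj hx hwx'.symm (by rintro rfl; simp at hw')

/-- Lemma: if `θ : T → T'` is a locally surjective homomorphism of trees and `(u,v)` is an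
arc of `T`, then the half-tree `T'_{(θ u, θ v)}` is contained in `θ(T_{(u,v)})`. -/
theorem halfTree_subset_image_halfTree
    (T : SimpleGraph V) (T' : SimpleGraph V') (hT : T.IsTree) (hT' : T'.IsTree)
    (θ : T →g T') (hls : LocallySurjective θ)
    (u v : V) (hadj : T.Adj u v) :
    ∀ w' : V', T'.dist w' (θ v) < T'.dist w' (θ u) →
      ∃ w : V, T.dist w v < T.dist w u ∧ θ w = w' :=
  halfTree_subset_image_halfTree_general T T' hT θ hls u v hadj
end

section
/- Let T and T′ be trees and let θ: T → T′ be a locally surjective graph homomorphism. If an arc (u,v) of T is pre-backtracking for θ, then θ maps the half-tree T_{(u,v)} onto all of T′: every vertex of T′ equals θ(w) for some vertex w with d(w,v) < d(w,u). -/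
open SimpleGraph

variable {V V' : Type*}

lemma dist_split {G : SimpleGraph V} {a b y : V} (p : G.Walk a b)
    (hp : p.length = G.dist a b) (hy : y ∈ p.support) :
    G.dist a y + G.dist y b ≤ G.dist a b := by
  classical
  have h1 := SimpleGraph.dist_le (p.takeUntil y hy)
  have h2 := SimpleGraph.dist_le (p.dropUntil y hy)
  have h3 := congrArg Walk.length (p.take_spec hy)
  rw [Walk.length_append] at h3
  omega

lemma tree_dist_ne_of_adj {T : SimpleGraph V} (hT : T.IsTree) {u v w : V}
    (h : T.Adj u v) : T.dist w u ≠ T.dist w v := by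
  have hc := hT.isConnected
  intro heq
  obtain ⟨p, hp, hlen⟩ := hc.exists_path_of_dist w u
  by_cases hv : v ∈ p.support
  · have hs := dist_split p hlen hv
    have h0 : T.dist v u ≠ 0 := fun h0 => h.ne (hc.dist_eq_zero_iff.mp h0).symm
    omega
  · have hq : (Walk.cons h.symm p.reverse).IsPath := by
      refine hp.reverse.cons ?_
      rwa [Walk.support_reverse, List.mem_reverse]
    set q := (Walk.cons h.symm p.reverse).reverse with hqdef
    have hqp : q.IsPath := hq.reverse
    obtain ⟨r, hr, hrlen⟩ := hc.exists_path_of_dist w v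
    obtain ⟨s, -, huniq⟩ := hT.existsUnique_path w v
    have : q = r := (huniq q hqp).trans (huniq r hr).symm
    have hql : q.length = p.length + 1 := by
      rw [hqdef, Walk.length_reverse, Walk.length_cons, Walk.length_reverse]
    rw [this, hrlen] at hql
    omega

lemma tree_cross {T : SimpleGraph V} (hT : T.IsTree) {u' v' w x : V}
    (hadj : T.Adj u' v') (hwx : T.Adj w x)
    (hw : T.dist w v' < T.dist w u') (hx : ¬ T.dist x v' < T.dist x u') :
    x = u' := by
  have hc := hT.isConnected
  by_contra hne
  have h1 : T.dist u' v' = 1 := by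
    have hle := SimpleGraph.dist_le hadj.toWalk
    have h0 : T.dist u' v' ≠ 0 := fun h0 => hadj.ne (hc.dist_eq_zero_iff.mp h0)
    simp at hle; omega
  have h1' : T.dist v' u' = 1 := by rw [SimpleGraph.dist_comm]; exact h1
  have htw : T.dist w u' ≤ T.dist w v' + 1 := by
    have := hc.dist_triangle (u := w) (v := v') (w := u'); omega
  have htx1 : T.dist x v' ≤ T.dist x u' + 1 := by
    have := hc.dist_triangle (u := x) (v := u') (w := v'); omega
  have hxne := tree_dist_ne_of_adj hT hadj (w := x)
  have hxx : T.dist x v' = T.dist x u' + 1 := by omega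
  have hww : T.dist w u' = T.dist w v' + 1 := by omega
  have hwx' : T.dist w v' ≠ T.dist x v' := by
    have h := tree_dist_ne_of_adj hT hwx (w := v')
    rw [SimpleGraph.dist_comm (u := v') (v := w), SimpleGraph.dist_comm (u := v') (v := x)] at h
    exact h
  have hwx1 : T.dist w x ≤ 1 := by simpa using SimpleGraph.dist_le hwx.toWalk
  have hxw1 : T.dist x w ≤ 1 := by simpa using SimpleGraph.dist_le hwx.symm.toWalk
  have hcase : T.dist x v' = T.dist w v' + 1 := by
    rcases Nat.lt_or_ge (T.dist x v') (T.dist w v') with hlt | hge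
    · have := hc.dist_triangle (u := w) (v := x) (w := u'); omega
    · have := hc.dist_triangle (u := x) (v := w) (w := v'); omega
  obtain ⟨q, hq, hql⟩ := hc.exists_path_of_dist w v'
  have hWlen : (Walk.cons hwx.symm q).length = T.dist x v' := by
    rw [Walk.length_cons, hql, hcase]
  have hWpath : (Walk.cons hwx.symm q).IsPath :=
    Walk.isPath_of_length_eq_dist _ hWlen
  obtain ⟨r, hr, hrl⟩ := hc.exists_path_of_dist x u'
  have hv'r : v' ∉ r.support := by
    intro hmem
    have := dist_split r hrl hmem
    omega
  have hPpath : ((Walk.cons hadj.symm r.reverse).reverse).IsPath :=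
    (hr.reverse.cons (by rwa [Walk.support_reverse, List.mem_reverse])).reverse
  obtain ⟨s, -, huniq⟩ := hT.existsUnique_path x v'
  have heqp : Walk.cons hwx.symm q = (Walk.cons hadj.symm r.reverse).reverse :=
    (huniq _ hWpath).trans (huniq _ hPpath).symm
  have hu'mem : u' ∈ (Walk.cons hwx.symm q).support := by
    rw [heqp]
    simp [Walk.support_reverse]
  rw [Walk.support_cons] at hu'mem
  rcases List.mem_cons.mp hu'mem with h' | h'
  · exact hne h'.symm
  · have := dist_split q hql h'
    omega

lemma exists_adj_dist {G : SimpleGraph V} (hc : G.Connected) {a b : V} {n : ℕ}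
    (h : G.dist a b = n + 1) : ∃ c, G.Adj a c ∧ G.dist c b = n := by
  obtain ⟨p, hp, hpl⟩ := hc.exists_path_of_dist a b
  cases p with
  | nil => rw [h] at hpl; simp at hpl
  | @cons _ c _ hadj q =>
    refine ⟨c, hadj, ?_⟩
    have h1 := SimpleGraph.dist_le q
    have h2 := hc.dist_triangle (u := a) (v := c) (w := b)
    have h3 : G.dist a c ≤ 1 := by simpa using SimpleGraph.dist_le hadj.toWalk
    rw [Walk.length_cons] at hpl
    omega

/-- Lemma: if `θ : T → T'` is a locally surjective homomorphism of trees and the arc `(u,v)`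
is pre-backtracking for `θ`, then `θ` maps the half-tree `T_{(u,v)}` onto all of `T'`. -/
theorem preBacktracking_image_halfTree_eq_univ
    (T : SimpleGraph V) (T' : SimpleGraph V') (hT : T.IsTree) (hT' : T'.IsTree)
    (θ : T →g T') (hls : LocallySurjective θ)
    (u v : V) (hpre : PreBacktracking θ u v) :
    ∀ w' : V', ∃ w : V, T.dist w v < T.dist w u ∧ θ w = w' := by
  intro w'
  obtain ⟨huv, u', v', ⟨hadj', u'', hne, hadj'', hθ⟩, hsub⟩ := hpre
  have hc := hT.isConnected
  have hc' := hT'.isConnected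
  suffices h : ∀ n : ℕ, ∀ w' : V', T'.dist (θ v') w' = n →
      ∃ w, T.dist w v' < T.dist w u' ∧ θ w = w' by
    obtain ⟨w, hw, hθw⟩ := h _ w' rfl
    exact ⟨w, hsub w hw, hθw⟩
  intro n
  induction n with
  | zero =>
    intro w' h0
    refine ⟨v', ?_, hc'.dist_eq_zero_iff.mp h0⟩
    have hs : T.dist v' v' = 0 := SimpleGraph.dist_self
    have h1 : T.dist v' u' ≠ 0 := fun h => hadj'.ne (hc.dist_eq_zero_iff.mp h).symm
    omega
  | succ n ih =>
    intro w' hd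
    have hd' : T'.dist w' (θ v') = n + 1 := by rw [SimpleGraph.dist_comm]; exact hd
    obtain ⟨x', hadjx', hdx'⟩ := exists_adj_dist hc' hd'
    obtain ⟨w, hwH, hθw⟩ := ih x' (by rw [SimpleGraph.dist_comm]; exact hdx')
    have hadjw : T'.Adj (θ w) w' := by rw [hθw]; exact hadjx'.symm
    obtain ⟨xx, hwxx, hθxx⟩ := hls w w' hadjw
    by_cases hH : T.dist xx v' < T.dist xx u'
    · exact ⟨xx, hH, hθxx⟩
    · have hxu : xx = u' := tree_cross hT hadj' hwxx hwH hH
      refine ⟨u'', ?_, by rw [hθ, ← hxu, hθxx]⟩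
      have h1 : T.dist u'' v' ≤ 1 := by simpa using SimpleGraph.dist_le hadj''.toWalk
      have hne2 := tree_dist_ne_of_adj hT hadj' (w := u'')
      have h0 : T.dist u'' u' ≠ 0 := fun h => hne (hc.dist_eq_zero_iff.mp h)
      have h2 : T.dist u'' v' ≠ 0 := fun h => hadj''.ne (hc.dist_eq_zero_iff.mp h)
      omega
end

section
/- Let T and T′ be trees and let θ: T → T′ be a graph homomorphism. Then θ is injective on vertices if and only if θ has no backtracking arc, i.e., there is no arc (u,v) of T together with a vertex u′ ≠ u adjacent to v such that θ(u′) = θ(u). -/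
open SimpleGraph

variable {V V' : Type*}

lemma SimpleGraph.Walk.IsPath.map_of_not_backtracking {T : SimpleGraph V} {T' : SimpleGraph V'}
    (hT' : T'.IsAcyclic) (θ : T →g T') (hθ : ¬ ∃ u v : V, Backtracking θ u v) {a b : V}
    {p : T.Walk a b} (hp : p.IsPath) : (p.map θ).IsPath := by
  induction p with
  | nil => simp
  | @cons a v b hav q ih =>
    rw [Walk.cons_isPath_iff] at hp
    have hq := ih hp.1
    refine (Walk.map_cons .. ▸ Walk.cons_isPath_iff _ _).2 ⟨hq, fun hmem ↦ ?_⟩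
    -- in the forest `T'`, a neighbour of the start of a path can only lie on it as its second vertex
    have hsnd : θ a = θ q.snd :=
      (hT'.eq_snd_of_adj_start hq (θ.map_adj hav).symm hmem).trans (Walk.getVert_map ..)
    by_cases hnil : q.Nil
    · cases hnil
      exact (θ.map_adj hav).ne hsnd
    · refine hθ ⟨a, v, hav, q.snd, fun h ↦ hp.2 ?_, (q.adj_snd hnil).symm, hsnd.symm⟩
      exact h ▸ q.getVert_mem_support 1

/-- A graph homomorphism between trees is injective on vertices if and only if it has no
backtracking arc. -/
theorem injective_iff_no_backtracking
    (T : SimpleGraph V) (T' : SimpleGraph V') (hT : T.IsTree) (hT' : T'.IsTree)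
    (θ : T →g T') :
    Function.Injective ⇑θ ↔ ¬ ∃ u v : V, Backtracking θ u v := by
  refine ⟨fun hinj ⟨_, _, _, _, hne, _, hθ⟩ ↦ hne (hinj hθ), fun hθ a b hab ↦ ?_⟩
  obtain ⟨p, hp⟩ := (hT.connected a b).exists_isPath
  have hnodup : (p.support.map θ).Nodup := by
    simpa only [Walk.support_map] using
      (hp.map_of_not_backtracking hT'.isAcyclic θ hθ).support_nodup
  exact List.inj_on_of_nodup_map hnodup p.start_mem_support p.end_mem_support hab
end

section
/- Let a group G act by automorphisms on trees T and T′, and let θ: T → T′ be a surjective, G-equivariant, locally surjective graph homomorphism. Suppose every arc of T is pre-backtracking for θ. Then for every arc (u,v) of T, every element g ∈ G that fixes the half-tree T_{(u,v)} pointwise acts trivially on T′ (g·w′ = w′ for every vertex w′ of T′). Consequently the subgroup of G generated by the pointwise stabilizers of half-trees of T acts trivially on T′. -/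
open SimpleGraph

variable {V V' : Type*}

section Helpers
variable {T : SimpleGraph V}

/-- In a tree, the distances from any vertex to the two endpoints of an edge differ by one. -/
lemma tree_dist_adj_cases (hT : T.IsTree) {u v : V} (huv : T.Adj u v) (w : V) :
    T.dist w u = T.dist w v + 1 ∨ T.dist w v = T.dist w u + 1 := by
  classical
  have hc := hT.isConnected
  obtain ⟨p, hp, hpl⟩ := hc.exists_path_of_dist v w
  by_cases hu : u ∈ p.support
  · right
    have h3 : T.dist u w ≤ (p.dropUntil u hu).length := dist_le _
    have h4 : (p.takeUntil u hu).length + (p.dropUntil u hu).length = p.length := by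
      rw [← Walk.length_append, Walk.take_spec]
    have h5 : (p.takeUntil u hu).length ≠ 0 := fun h0 => huv.ne (Walk.eq_of_length_eq_zero h0).symm
    have h6 : T.dist v w ≤ T.dist v u + T.dist u w := hc.dist_triangle
    have h7 : T.dist v u = 1 := dist_eq_one_iff_adj.mpr huv.symm
    have e1 : T.dist w v = T.dist v w := dist_comm
    have e2 : T.dist w u = T.dist u w := dist_comm
    omega
  · left
    have hq : (Walk.cons huv p).IsPath := hp.cons hu
    obtain ⟨r, hr, hrl⟩ := hc.exists_path_of_dist u w
    have huniq : (⟨Walk.cons huv p, hq⟩ : T.Path u w) = ⟨r, hr⟩ :=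
      hT.IsAcyclic.path_unique _ _
    have hlen : (Walk.cons huv p).length = r.length := by rw [congrArg (·.val.length) huniq]
    simp only [Walk.length_cons] at hlen
    have e1 : T.dist w v = T.dist v w := dist_comm
    have e2 : T.dist w u = T.dist u w := dist_comm
    omega

/-- Half-trees in a tree are closed under adjacency, except at the root edge. -/
lemma half_tree_closed (hT : T.IsTree) {u v w x : V} (huv : T.Adj u v) (hwx : T.Adj w x)
    (hw : T.dist w v < T.dist w u) (hx : ¬ T.dist x v < T.dist x u) : w = v ∧ x = u := by
  classical
  have hc := hT.isConnected
  have h1 : T.dist w u = T.dist w v + 1 :=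
    (tree_dist_adj_cases hT huv w).resolve_right (by omega)
  have h2 : T.dist x v = T.dist x u + 1 :=
    (tree_dist_adj_cases hT huv x).resolve_left (by omega)
  have hxw : T.dist x w = 1 := dist_eq_one_iff_adj.mpr hwx.symm
  have hwx1 : T.dist w x = 1 := dist_eq_one_iff_adj.mpr hwx
  have t1 : T.dist w u ≤ T.dist w x + T.dist x u := hc.dist_triangle
  have t2 : T.dist x v ≤ T.dist x w + T.dist w v := hc.dist_triangle
  have hxu : T.dist x u = T.dist w v := by omega
  rcases Nat.eq_zero_or_pos (T.dist w v) with ha | ha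
  · constructor
    · exact hc.dist_eq_zero_iff.mp ha
    · exact hc.dist_eq_zero_iff.mp (by omega)
  · exfalso
    obtain ⟨p, hp, hpl⟩ := hc.exists_path_of_dist v w
    have hdvw : T.dist v w = T.dist w v := dist_comm
    have hdxu : T.dist u w = T.dist w u := dist_comm
    have hup : u ∉ p.support := by
      intro hu
      have h3 : T.dist u w ≤ (p.dropUntil u hu).length := dist_le _
      have h4 : (p.takeUntil u hu).length + (p.dropUntil u hu).length = p.length := by
        rw [← Walk.length_append, Walk.take_spec]
      have h5 : (p.takeUntil u hu).length ≠ 0 := fun h0 =>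
        huv.ne (Walk.eq_of_length_eq_zero h0).symm
      omega
    obtain ⟨r, hrp, hrl⟩ := hc.exists_path_of_dist x u
    have hwr : w ∉ r.support := by
      intro hwr
      have h3 : T.dist w u ≤ (r.dropUntil w hwr).length := dist_le _
      have h4 : (r.takeUntil w hwr).length + (r.dropUntil w hwr).length = r.length := by
        rw [← Walk.length_append, Walk.take_spec]
      have h5 : (r.takeUntil w hwr).length ≠ 0 := fun h0 =>
        hwx.ne (Walk.eq_of_length_eq_zero h0).symm
      omega
    have hq1 : (Walk.cons huv p).IsPath := hp.cons hup
    have hq2 : ((Walk.cons hwx r).reverse : T.Walk u w).IsPath := (hrp.cons hwr).reverse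
    have huniq : (⟨Walk.cons huv p, hq1⟩ : T.Path u w) = ⟨(Walk.cons hwx r).reverse, hq2⟩ :=
      hT.IsAcyclic.path_unique _ _
    have hvmem : v ∈ (Walk.cons huv p).support := by
      rw [Walk.support_cons]; exact List.mem_cons_of_mem _ p.start_mem_support
    have hvmem2 : v ∈ (Walk.cons hwx r).support := by
      have := congrArg (fun q : T.Path u w => v ∈ q.val.support) huniq
      simp only [eq_iff_iff] at this
      have h6 : v ∈ (Walk.cons hwx r).reverse.support := this.mp hvmem
      rwa [Walk.support_reverse, List.mem_reverse] at h6
    rw [Walk.support_cons] at hvmem2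
    rcases List.mem_cons.mp hvmem2 with hvw | hvr
    · have : T.dist w v = 0 := by subst hvw; exact dist_self
      omega
    · have h7 : T.dist x v ≤ (r.takeUntil v hvr).length := dist_le _
      have h8 : (r.takeUntil v hvr).length ≤ r.length := Walk.length_takeUntil_le _ _
      omega

end Helpers

/-- Proposition: let a group `G` act by automorphisms on trees `T`, `T'` and let
`θ : T → T'` be a surjective, `G`-equivariant, locally surjective graph homomorphism such
that every arc of `T` is pre-backtracking for `θ`. Then every element of `G` fixing a
half-tree of `T` pointwise acts trivially on `T'`; consequently, the subgroup of `G`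
generated by pointwise stabilizers of half-trees acts trivially on `T'`. -/
theorem halfTreeFixators_act_trivially
    {G : Type*} [Group G]
    (T : SimpleGraph V) (T' : SimpleGraph V') (hT : T.IsTree) (hT' : T'.IsTree)
    (φ : G →* ↥(T.autGroup)) (ψ : G →* ↥(T'.autGroup))
    (θ : T →g T') (hsurj : Function.Surjective ⇑θ)
    (hequiv : ∀ (g : G) (x : V), θ ((φ g).val x) = (ψ g).val (θ x))
    (hls : LocallySurjective θ)
    (hpre : ∀ u v : V, T.Adj u v → PreBacktracking θ u v) :
    (∀ u v : V, T.Adj u v → ∀ g : G,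
      (∀ w : V, T.dist w v < T.dist w u → (φ g).val w = w) →
      ∀ w' : V', (ψ g).val w' = w') ∧
    (∀ g ∈ Subgroup.closure {g : G | ∃ u v : V, T.Adj u v ∧
        ∀ w : V, T.dist w v < T.dist w u → (φ g).val w = w},
      ∀ w' : V', (ψ g).val w' = w') := by
  classical
  have key : ∀ u v : V, T.Adj u v → ∀ g : G,
      (∀ w : V, T.dist w v < T.dist w u → (φ g).val w = w) →
      ∀ w' : V', (ψ g).val w' = w' := by
    intro u v huv g hfix w'
    obtain ⟨-, u', v', ⟨hu'v', u'', hne, hadj'', himg⟩, hsub⟩ := hpre u v huv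
    have hv'mem : T.dist v' v' < T.dist v' u' := by
      have h := tree_dist_adj_cases hT hu'v' v'
      have h0 : T.dist v' v' = 0 := dist_self
      omega
    have hu''mem : T.dist u'' v' < T.dist u'' u' := by
      have h := tree_dist_adj_cases hT hu'v' u''
      have h1 : T.dist u'' v' = 1 := dist_eq_one_iff_adj.mpr hadj''
      have h0 : T.dist u'' u' ≠ 0 := fun h0 => hne (hT.isConnected.dist_eq_zero_iff.mp h0)
      omega
    have main : ∀ (z y' : V') (p : T'.Walk y' z),
        (∃ w : V, T.dist w v' < T.dist w u' ∧ θ w = z) →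
        ∃ w : V, T.dist w v' < T.dist w u' ∧ θ w = y' := by
      intro z y' p hz
      induction p with
      | nil => exact hz
      | cons h q ih =>
        specialize ih hz
        obtain ⟨w, hwmem, hwim⟩ := ih
        obtain ⟨x, hwx, hximg⟩ := hls w _ (by rw [hwim]; exact h.symm)
        by_cases hx : T.dist x v' < T.dist x u'
        · exact ⟨x, hx, hximg⟩
        · obtain ⟨hwv', hxu'⟩ := half_tree_closed hT hu'v' hwx hwmem hx
          refine ⟨u'', hu''mem, ?_⟩
          rw [himg, ← hxu', hximg]
    obtain ⟨p⟩ := hT'.isConnected.preconnected w' (θ v')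
    obtain ⟨w, hwmem, hwim⟩ := main (θ v') w' p ⟨v', hv'mem, rfl⟩
    have hfw : (φ g).val w = w := hfix w (hsub w hwmem)
    rw [← hwim, ← hequiv g w, hfw]
  refine ⟨key, ?_⟩
  intro g hg w'
  let f : G →* Equiv.Perm V' := (T'.autGroup.subtype).comp ψ
  have hker : g ∈ f.ker := by
    refine (Subgroup.closure_le f.ker).mpr ?_ hg
    rintro a ⟨u, v, huv, hfix⟩
    have : f a = 1 := Equiv.ext fun w' => key u v huv a hfix w'
    exact this
  have : f g = 1 := hker
  calc (ψ g).val w' = (f g) w' := rfl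
    _ = w' := by rw [this]; rfl
end

section
/- Let T be a tree and let O be a strongly confluent partial orientation of T. Let C = {v : no arc of O has origin v}, and suppose C is nonempty. Then: (a) C is convex: if u, w ∈ C and v is a vertex with d(u,v) + d(v,w) = d(u,w), then v ∈ C; (b) for every vertex v there exists n ≥ 0 with f_O^n(v) ∈ C; (c) for every vertex v ∉ C, the arc (v, f_O(v)) points toward C, i.e., d(f_O(v), C) = d(v, C) − 1, where d(w,C) is the minimum of d(w,c) over c ∈ C. -/
open SimpleGraph

variable {V : Type*}

/-- A strongly confluent partial orientation (s.c.p.o.) of a simple graph `Γ`: a set `O` of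
arcs (ordered pairs of adjacent vertices) such that (i) `O` never contains both an arc and
its reverse; (ii) at most one arc of `O` originates at each vertex; (iii) if some arc of
`O` originates at `v`, then every edge incident with `v` is oriented by `O`. -/
def IsSCPO (Γ : SimpleGraph V) (O : Set (V × V)) : Prop :=
  (∀ p ∈ O, Γ.Adj p.1 p.2) ∧
  (∀ u v : V, (u, v) ∈ O → (v, u) ∉ O) ∧
  (∀ v u u' : V, (v, u) ∈ O → (v, u') ∈ O → u = u') ∧
  (∀ v u : V, (v, u) ∈ O → ∀ w : V, Γ.Adj v w → ((v, w) ∈ O ∨ (w, v) ∈ O))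

/-- The map associated with a confluent partial orientation: `fO O v` is the terminus of
the arc of `O` originating at `v` if there is one, and `v` otherwise. -/
noncomputable def fO (O : Set (V × V)) (v : V) : V :=
  haveI := Classical.propDecidable (∃ w : V, (v, w) ∈ O)
  if h : ∃ w : V, (v, w) ∈ O then h.choose else v

/-- The set of vertices at which no arc of `O` originates. -/
def sinkSet (O : Set (V × V)) : Set V := {v : V | ¬ ∃ w : V, (v, w) ∈ O}

lemma fO_spec {O : Set (V × V)} {v : V} (h : ∃ w, (v, w) ∈ O) : (v, fO O v) ∈ O := by
  classical
  unfold fO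
  rw [dif_pos h]
  exact h.choose_spec

lemma fO_eq {T : SimpleGraph V} {O : Set (V × V)} (hO : IsSCPO T O) {v u : V}
    (h : (v, u) ∈ O) : fO O v = u :=
  hO.2.2.1 v _ u (fO_spec ⟨u, h⟩) h

/-- Key lemma: if `v` is not a sink and `c` is a sink, then `fO` moves `v` one step
closer to `c`. -/
lemma fO_dist_key {T : SimpleGraph V} (hc : T.Connected) {O : Set (V × V)}
    (hO : IsSCPO T O) {c : V} (hcC : c ∈ sinkSet O) :
    ∀ n, ∀ v, T.dist v c = n → v ∉ sinkSet O → T.dist (fO O v) c = n - 1 := by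
  intro n
  induction n using Nat.strong_induction_on with
  | _ n ih =>
    intro v hdist hv
    rw [sinkSet, Set.mem_setOf_eq, not_not] at hv
    have hvc : v ≠ c := fun h => hcC (h ▸ hv)
    have hn1 : 1 ≤ n := hdist ▸ hc.pos_dist_of_ne hvc
    -- get a shortest walk from v to c
    obtain ⟨p, hp⟩ := (hc v c).exists_walk_length_eq_dist
    rw [hdist] at hp
    cases p with
    | nil => simp at hp; omega
    | cons hadj q =>
      rename_i v1
      simp only [Walk.length_cons] at hp
      have hd1 : T.dist v1 c = n - 1 := by
        have h1 : T.dist v1 c ≤ n - 1 := by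
          have := T.dist_le q
          omega
        have h2 : T.dist v v1 ≤ 1 := by
          have := T.dist_le (Walk.cons hadj Walk.nil)
          simpa using this
        have h3 := hc.dist_triangle (u := v) (v := v1) (w := c)
        omega
      rcases hO.2.2.2 v (fO O v) (fO_spec hv) v1 hadj with h | h
      · rw [fO_eq hO h]; exact hd1
      · -- (v1, v) ∈ O, derive contradiction
        exfalso
        have hv1 : v1 ∉ sinkSet O := fun hs => hs ⟨v, h⟩
        have := ih (n - 1) (by omega) v1 hd1 hv1
        rw [fO_eq hO h] at this
        omega

/-- Theorem: for a strongly confluent partial orientation `O` of a tree `T` whose sink set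
`C` is nonempty: (a) `C` is convex; (b) every forward `f_O`-orbit reaches `C`; (c) for
`v ∉ C` the arc `(v, f_O v)` points towards `C`. -/
theorem scpo_with_sinks
    (T : SimpleGraph V) (hT : T.IsTree) (O : Set (V × V)) (hO : IsSCPO T O)
    (hC : (sinkSet O).Nonempty) :
    (∀ u ∈ sinkSet O, ∀ w ∈ sinkSet O, ∀ v : V,
      T.dist u v + T.dist v w = T.dist u w → v ∈ sinkSet O) ∧
    (∀ v : V, ∃ n : ℕ, (fO O)^[n] v ∈ sinkSet O) ∧
    (∀ v : V, v ∉ sinkSet O →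
      sInf (T.dist (fO O v) '' sinkSet O) = sInf (T.dist v '' sinkSet O) - 1) := by
  have hc : T.Connected := hT.isConnected
  have key := fun {c} hcC => fO_dist_key hc hO (c := c) hcC
  -- part (c)
  have partc : ∀ v : V, v ∉ sinkSet O →
      sInf (T.dist (fO O v) '' sinkSet O) = sInf (T.dist v '' sinkSet O) - 1 := by
    intro v hv
    have hA : (T.dist v '' sinkSet O).Nonempty := hC.image _
    obtain ⟨c0, hc0, hc0d⟩ := Nat.sInf_mem hA
    apply le_antisymm
    · have := key hc0 (T.dist v c0) v rfl hv
      rw [hc0d] at this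
      calc sInf (T.dist (fO O v) '' sinkSet O) ≤ T.dist (fO O v) c0 :=
            Nat.sInf_le ⟨c0, hc0, rfl⟩
        _ = sInf (T.dist v '' sinkSet O) - 1 := this
    · apply le_csInf (hC.image _)
      rintro b ⟨c, hcS, rfl⟩
      have := key hcS (T.dist v c) v rfl hv
      have hge : sInf (T.dist v '' sinkSet O) ≤ T.dist v c := Nat.sInf_le ⟨c, hcS, rfl⟩
      omega
  refine ⟨?_, ?_, partc⟩
  · -- part (a)
    intro u hu w hw v hsum
    by_contra hv
    have hu1 := key hu (T.dist v u) v rfl hv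
    have hw1 := key hw (T.dist v w) v rfl hv
    have h1 : 1 ≤ T.dist v u := hc.pos_dist_of_ne (fun h => hv (h ▸ hu))
    have h2 : 1 ≤ T.dist v w := hc.pos_dist_of_ne (fun h => hv (h ▸ hw))
    have htri := hc.dist_triangle (u := u) (v := fO O v) (w := w)
    rw [dist_comm (G := T) (u := u) (v := fO O v), hu1] at htri
    rw [dist_comm (G := T) (u := u) (v := v)] at hsum
    omega
  · -- part (b)
    intro v
    obtain ⟨n, hn⟩ : ∃ n, sInf (T.dist v '' sinkSet O) = n := ⟨_, rfl⟩
    induction n using Nat.strong_induction_on generalizing v with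
    | _ n ih =>
      by_cases hv : v ∈ sinkSet O
      · exact ⟨0, hv⟩
      · have hstep := partc v hv
        obtain ⟨c0, hc0, hc0d⟩ := Nat.sInf_mem (hC.image (T.dist v))
        have hpos : 1 ≤ T.dist v c0 := hc.pos_dist_of_ne (fun h => hv (h ▸ hc0))
        have hn1 : 1 ≤ n := by omega
        obtain ⟨k, hk⟩ := ih (n - 1) (by omega) (fO O v) (by rw [hstep, hn])
        exact ⟨k + 1, by rwa [Function.iterate_succ_apply]⟩
end

section
/- Let n ≥ 3 and let C_n be the cycle graph on ZMod n, in which i and j are adjacent exactly when j = i + 1 or j = i − 1. Then every strongly confluent partial orientation O of C_n is either empty, or equal to {(i, i+1) : i ∈ ZMod n}, or equal to {(i, i−1) : i ∈ ZMod n} (one of the two cyclic orientations). -/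
open SimpleGraph

variable {V : Type*}

/-- The cycle graph on `ZMod n`: `i` and `j` are adjacent exactly when `j = i + 1` or
`j = i - 1` (for `n ≥ 3` the clause `i ≠ j` is automatic). -/
def cycleGraphZMod (n : ℕ) : SimpleGraph (ZMod n) where
  Adj i j := i ≠ j ∧ (j = i + 1 ∨ j = i - 1)
  symm := by
    constructor
    intro i j h
    obtain ⟨hne, h | h⟩ := h
    · exact ⟨hne.symm, Or.inr (by rw [h]; ring)⟩
    · exact ⟨hne.symm, Or.inl (by rw [h]; ring)⟩
  loopless := by
    constructor
    intro i h
    exact h.1 rfl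

/-!
Once an arc `(v, v + d)` (with `d = ±1`) lies in `O`, the edge `{v - d, v}` must be oriented,
and since `v` already sends its only arc to `v + d ≠ v - d`, it is oriented as `(v - d, v)`.
Walking backwards around the cycle, every arc `(i, i + d)` lies in `O`, and then uniqueness of
outgoing arcs leaves no room for anything else.
-/

theorem IsSCPO.eq_setOf_of_forall_mem {Γ : SimpleGraph V} {O : Set (V × V)} (hO : IsSCPO Γ O)
    {f : V → V} (hf : ∀ v, (v, f v) ∈ O) : O = {p | p.2 = f p.1} := by
  ext ⟨a, b⟩
  exact ⟨fun hab => hO.2.2.1 a b (f a) hab (hf a), fun (hab : b = f a) => hab ▸ hf a⟩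

theorem ZMod.two_ne_zero_of_three_le {n : ℕ} (hn : 3 ≤ n) : (2 : ZMod n) ≠ 0 := by
  intro h
  have h2 : n ∣ 2 := (ZMod.natCast_eq_zero_iff 2 n).mp (by exact_mod_cast h)
  have := Nat.le_of_dvd two_pos h2
  omega

theorem cycleGraphZMod.adj_sub {n : ℕ} (h2 : (2 : ZMod n) ≠ 0) {d : ZMod n}
    (hd : d = 1 ∨ d = -1) (v : ZMod n) : (cycleGraphZMod n).Adj v (v - d) := by
  have h1 : (1 : ZMod n) ≠ 0 := fun h => h2 (by linear_combination 2 * h)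
  rcases hd with rfl | rfl
  · exact ⟨fun h => h1 (by linear_combination h), Or.inr rfl⟩
  · exact ⟨fun h => h1 (by linear_combination -h), Or.inl (by ring)⟩

namespace IsSCPO

variable {n : ℕ} {O : Set (ZMod n × ZMod n)} {d : ZMod n}

theorem sub_mem_of_add_mem_cycleGraphZMod (hO : IsSCPO (cycleGraphZMod n) O)
    (h2 : (2 : ZMod n) ≠ 0) (hd : d = 1 ∨ d = -1) {v : ZMod n} (h : (v, v + d) ∈ O) :
    (v - d, v) ∈ O := by
  refine (hO.2.2.2 v _ h (v - d) (cycleGraphZMod.adj_sub h2 hd v)).resolve_left fun h' => ?_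
  have hdd : v + d = v - d := hO.2.2.1 v _ _ h h'
  rcases hd with rfl | rfl
  · exact h2 (by linear_combination hdd)
  · exact h2 (by linear_combination -hdd)

theorem forall_add_mem_cycleGraphZMod [NeZero n] (hO : IsSCPO (cycleGraphZMod n) O)
    (h2 : (2 : ZMod n) ≠ 0) (hd : d = 1 ∨ d = -1) {v : ZMod n} (h : (v, v + d) ∈ O)
    (i : ZMod n) : (i, i + d) ∈ O := by
  have hback : ∀ k : ℕ, (v - k * d, v - k * d + d) ∈ O := by
    intro k
    induction k with
    | zero => simpa using h
    | succ k ih =>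
      convert hO.sub_mem_of_add_mem_cycleGraphZMod h2 hd ih using 2 <;> push_cast <;> ring
  have hdd : d * d = 1 := by rcases hd with rfl | rfl <;> ring
  obtain ⟨k, hk⟩ := ZMod.natCast_zmod_surjective ((v - i) * d)
  have hi : v - k * d = i := by linear_combination (-d) * hk - (v - i) * hdd
  exact hi ▸ hback k

theorem eq_setOf_add_of_mem_cycleGraphZMod [NeZero n] (hO : IsSCPO (cycleGraphZMod n) O)
    (h2 : (2 : ZMod n) ≠ 0) (hd : d = 1 ∨ d = -1) {v : ZMod n} (h : (v, v + d) ∈ O) :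
    O = {p | p.2 = p.1 + d} :=
  hO.eq_setOf_of_forall_mem (hO.forall_add_mem_cycleGraphZMod h2 hd h)

end IsSCPO

/-- Lemma: for `n ≥ 3`, every strongly confluent partial orientation of the cycle graph
`C_n` is empty or one of the two cyclic orientations. -/
theorem scpo_of_cycleGraph (n : ℕ) (hn : 3 ≤ n) (O : Set (ZMod n × ZMod n))
    (hO : IsSCPO (cycleGraphZMod n) O) :
    O = ∅ ∨ O = {p : ZMod n × ZMod n | p.2 = p.1 + 1} ∨
      O = {p : ZMod n × ZMod n | p.2 = p.1 - 1} := by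
  have : NeZero n := ⟨by omega⟩
  have h2 := ZMod.two_ne_zero_of_three_le hn
  rcases O.eq_empty_or_nonempty with hempty | ⟨⟨v, u⟩, hvu⟩
  · exact Or.inl hempty
  obtain ⟨-, rfl | rfl⟩ : (cycleGraphZMod n).Adj v u := hO.1 _ hvu
  · exact Or.inr (Or.inl (hO.eq_setOf_add_of_mem_cycleGraphZMod h2 (Or.inl rfl) hvu))
  · simp only [sub_eq_add_neg] at hvu ⊢
    exact Or.inr (Or.inr (hO.eq_setOf_add_of_mem_cycleGraphZMod h2 (Or.inr rfl) hvu))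
end
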